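/- Let 𝒯 be a pretriangulated category, A a subring of ℚ, and X → Y → Z → X[1] a distinguished triangle in 𝒯. If n • 𝟙_X = 0 and n • 𝟙_Y = 0 for some nonzero integer n invertible in A, then n² • 𝟙_Z = 0. Consequently, in any distinguished triangle in which two of the three objects are A-torsion, the third is A-torsion as well, and the full subcategory of A-torsion objects of 𝒯 is a thick triangulated subcategory (triangulated and closed under direct summands). -/
import Mathlib


open CategoryTheory Limits Pretriangulated

/-- An object `X` is `A`-torsion if `n • 𝟙 X = 0` for some nonzero integer `n`
invertible in `A`. -/
def IsATorsion (A : Subring ℚ) {C : Type*} [Category C] [Preadditive C] (X : C) : Prop :=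
  ∃ n : ℤ, n ≠ 0 ∧ IsUnit (n : A) ∧ (n : ℤ) • 𝟙 X = 0

section Aux

variable {C : Type*} [Category C]
  [HasZeroObject C] [Preadditive C] [HasShift C ℤ]
  [∀ n : ℤ, (CategoryTheory.shiftFunctor C n).Additive] [Pretriangulated C]

lemma aux_key (T : Triangle C) (hT : T ∈ distTriang C) (n : ℤ)
    (h₁ : (n : ℤ) • 𝟙 T.obj₁ = 0) (h₂ : (n : ℤ) • 𝟙 T.obj₂ = 0) :
    (n ^ 2 : ℤ) • 𝟙 T.obj₃ = 0 := by
  have hmor : ((n : ℤ) • 𝟙 T.obj₃) ≫ T.mor₃ = 0 := by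
    rw [Preadditive.zsmul_comp, Category.id_comp]
    have : T.mor₃ ≫ ((n : ℤ) • 𝟙 T.obj₁)⟦(1 : ℤ)⟧' = T.mor₃ ≫ (0 : T.obj₁⟦(1:ℤ)⟧ ⟶ _) := by
      rw [h₁]; simp
    simpa [Functor.map_zsmul] using this
  obtain ⟨g, hg⟩ := Triangle.coyoneda_exact₃ T hT ((n : ℤ) • 𝟙 T.obj₃) hmor
  have : (n ^ 2 : ℤ) • 𝟙 T.obj₃ = (n : ℤ) • ((n : ℤ) • 𝟙 T.obj₃) := by
    rw [smul_smul]; ring_nf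
  rw [this, hg, ← Preadditive.comp_zsmul]
  have h : (n : ℤ) • T.mor₂ = 0 := by
    rw [← Category.id_comp T.mor₂, ← Preadditive.zsmul_comp, h₂]; simp
  rw [h]; simp

lemma aux_shift (A : Subring ℚ) (X : C) (n : ℤ) (h : IsATorsion A X) :
    IsATorsion A (X⟦n⟧) := by
  obtain ⟨m, hm0, hmu, hm⟩ := h
  refine ⟨m, hm0, hmu, ?_⟩
  have : (shiftFunctor C n).map ((m : ℤ) • 𝟙 X) = (shiftFunctor C n).map 0 := by rw [hm]
  simpa [Functor.map_zsmul] using this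

lemma aux_retract (A : Subring ℚ) (X Y : C) (s : X ⟶ Y) (r : Y ⟶ X) (hsr : s ≫ r = 𝟙 X)
    (h : IsATorsion A Y) : IsATorsion A X := by
  obtain ⟨m, hm0, hmu, hm⟩ := h
  refine ⟨m, hm0, hmu, ?_⟩
  have := congrArg (fun f => s ≫ f ≫ r) hm
  simpa [hsr] using this

lemma aux_third (A : Subring ℚ) (T : Triangle C) (hT : T ∈ distTriang C)
    (h₁ : IsATorsion A T.obj₁) (h₂ : IsATorsion A T.obj₂) : IsATorsion A T.obj₃ := by
  obtain ⟨n, hn0, hnu, hn⟩ := h₁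
  obtain ⟨m, hm0, hmu, hm⟩ := h₂
  refine ⟨(n * m) ^ 2, by positivity, ?_, ?_⟩
  · have : (((n * m) ^ 2 : ℤ) : A) = ((n : A) * m) ^ 2 := by push_cast; ring
    rw [this]; exact ((hnu.mul hmu).pow 2)
  · apply aux_key T hT (n * m)
    · rw [mul_comm, mul_smul, hn]; simp
    · rw [mul_smul, hm]; simp

end Aux

/-- Proposition B.2.1 a): in a distinguished triangle `X → Y → Z → X[1]`, if
`n • 𝟙 X = 0` and `n • 𝟙 Y = 0` (with `n ≠ 0` invertible in `A`) then `n² • 𝟙 Z = 0`;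
consequently if two of the three objects of a distinguished triangle are `A`-torsion so is
the third, and the `A`-torsion objects form a thick triangulated subcategory (containing
the zero objects, closed under shifts, cones, and direct summands). -/
theorem stmt_2 (A : Subring ℚ) {C : Type*} [Category C]
    [HasZeroObject C] [Preadditive C] [HasShift C ℤ]
    [∀ n : ℤ, (CategoryTheory.shiftFunctor C n).Additive] [Pretriangulated C] :
    (∀ (T : Triangle C), T ∈ (distTriang C) → ∀ n : ℤ, n ≠ 0 → IsUnit (n : A) →
        (n : ℤ) • 𝟙 T.obj₁ = 0 → (n : ℤ) • 𝟙 T.obj₂ = 0 →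
        (n ^ 2 : ℤ) • 𝟙 T.obj₃ = 0) ∧
    (∀ (T : Triangle C), T ∈ (distTriang C) →
        (IsATorsion A T.obj₁ → IsATorsion A T.obj₂ → IsATorsion A T.obj₃) ∧
        (IsATorsion A T.obj₂ → IsATorsion A T.obj₃ → IsATorsion A T.obj₁) ∧
        (IsATorsion A T.obj₁ → IsATorsion A T.obj₃ → IsATorsion A T.obj₂)) ∧
    (∀ X : C, IsZero X → IsATorsion A X) ∧
    (∀ (X : C) (n : ℤ), IsATorsion A X → IsATorsion A (X⟦n⟧)) ∧
    (∀ (X Y : C) (s : X ⟶ Y) (r : Y ⟶ X), s ≫ r = 𝟙 X →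
        IsATorsion A Y → IsATorsion A X) := by
  refine ⟨fun T hT n _ _ h₁ h₂ => aux_key T hT n h₁ h₂, ?_, ?_,
    fun X n h => aux_shift A X n h, fun X Y s r hsr h => aux_retract A X Y s r hsr h⟩
  · intro T hT
    refine ⟨fun h₁ h₂ => aux_third A T hT h₁ h₂, ?_, ?_⟩
    · intro h₂ h₃
      have := aux_third A _ (rot_of_distTriang T hT) h₂ h₃
      -- this : IsATorsion A (T.obj₁⟦1⟧)
      have h' := aux_shift A _ (-1 : ℤ) this
      exact aux_retract A T.obj₁ _ ((shiftEquiv C (1 : ℤ)).unit.app T.obj₁)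
        ((shiftEquiv C (1 : ℤ)).unitInv.app T.obj₁) (by simp) h'
    · intro h₁ h₃
      have h₃' := aux_shift A T.obj₃ (-1 : ℤ) h₃
      exact aux_third A _ (inv_rot_of_distTriang T hT) h₃' h₁
  · intro X hX
    exact ⟨1, one_ne_zero, by simp, by rw [hX.eq_of_src (𝟙 X) 0]; simp⟩
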